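/- Let k ≥ 2 and let G be a finite triangle-free simple graph. Let G* be the graph consisting of three vertex-disjoint copies of G, (k − 2) pairwise vertex-disjoint triangles (disjoint from everything else), and one additional vertex u adjacent to every vertex of the three copies of G (and to no vertex of the triangles). Then G admits a proper 3-coloring if and only if there exists a splitting sequence of at most k splits starting with G* and ending in a triangle-free graph. -/

import Mathlib

open SimpleGraph

/-- `G'` is obtained from the simple graph `G` by splitting the vertex `v` into the two
new nonadjacent vertices `v₁, v₂`: the remaining vertices are identified by `keep`,
adjacency among them is preserved, the neighborhoods of `v₁` and `v₂` are subsets of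
(the copy of) `N_G(v)`, and together they cover `N_G(v)`. -/
structure VertexSplit {V : Type*} {W : Type*} (G : SimpleGraph V) (G' : SimpleGraph W)
    (v : V) (v₁ v₂ : W) where
  keep : {u : V // u ≠ v} ≃ {w : W // w ≠ v₁ ∧ w ≠ v₂}
  ne : v₁ ≠ v₂
  newNotAdj : ¬ G'.Adj v₁ v₂
  adj_keep : ∀ a b : {u : V // u ≠ v}, G'.Adj (keep a).1 (keep b).1 ↔ G.Adj a.1 b.1
  adj_new₁ : ∀ a : {u : V // u ≠ v}, G'.Adj (keep a).1 v₁ → G.Adj a.1 v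
  adj_new₂ : ∀ a : {u : V // u ≠ v}, G'.Adj (keep a).1 v₂ → G.Adj a.1 v
  adj_cover : ∀ a : {u : V // u ≠ v}, G.Adj a.1 v → G'.Adj (keep a).1 v₁ ∨ G'.Adj (keep a).1 v₂

/-- `w` is a descendant of `u` with respect to the split `D`: the split vertex `v` has the
two descendants `v₁, v₂`, every other vertex is its own unique descendant. -/
def VertexSplit.Desc {V W : Type*} {G : SimpleGraph V} {G' : SimpleGraph W}
    {v : V} {v₁ v₂ : W} (D : VertexSplit G G' v v₁ v₂) (u : V) (w : W) : Prop :=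
  (u = v ∧ (w = v₁ ∨ w = v₂)) ∨ ∃ h : u ≠ v, w = (D.keep ⟨u, h⟩).1


/-- A finite simple graph with an arbitrary vertex type. -/
structure FinGraph : Type 1 where
  V : Type
  fin : Finite V
  G : SimpleGraph V

/-- `B` is obtained from `A` by a single vertex split. -/
def FinGraph.Step (A B : FinGraph) : Prop :=
  ∃ (v : A.V) (v₁ v₂ : B.V), Nonempty (VertexSplit A.G B.G v v₁ v₂)

/-- The gadget graph: three vertex-disjoint copies of `G`, `k − 2` pairwise disjoint
triangles, and one extra vertex adjacent to every vertex of the three copies of `G`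
(and to nothing else). -/
def gadget {V : Type} (G : SimpleGraph V) (k : ℕ) :
    SimpleGraph ((Fin 3 × V) ⊕ (Fin (k - 2) × Fin 3) ⊕ Unit) :=
  SimpleGraph.fromRel (fun a b =>
    match a, b with
    | Sum.inl (i, u), Sum.inl (j, v) => i = j ∧ G.Adj u v
    | Sum.inl _, Sum.inr (Sum.inr _) => True
    | Sum.inr (Sum.inl (t, x)), Sum.inr (Sum.inl (s, y)) => t = s ∧ x ≠ y
    | _, _ => False)

namespace VertexSplit

variable {V W : Type*} {G : SimpleGraph V} {G' : SimpleGraph W}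
    {v : V} {v₁ v₂ : W} (D : VertexSplit G G' v v₁ v₂)

lemma desc_exists (w : W) : ∃ m, D.Desc m w := by
  by_cases h1 : w = v₁
  · exact ⟨v, Or.inl ⟨rfl, Or.inl h1⟩⟩
  by_cases h2 : w = v₂
  · exact ⟨v, Or.inl ⟨rfl, Or.inr h2⟩⟩
  · refine ⟨(D.keep.symm ⟨w, h1, h2⟩).1, Or.inr ⟨(D.keep.symm ⟨w, h1, h2⟩).2, ?_⟩⟩
    simp

lemma desc_of_ne {m : V} (h : m ≠ v) : D.Desc m (D.keep ⟨m, h⟩).1 := Or.inr ⟨h, rfl⟩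

lemma desc_v₁ : D.Desc v v₁ := Or.inl ⟨rfl, Or.inl rfl⟩
lemma desc_v₂ : D.Desc v v₂ := Or.inl ⟨rfl, Or.inr rfl⟩

lemma eq_of_desc_desc {m m' : V} {w : W} (h : D.Desc m w) (h' : D.Desc m' w) : m = m' := by
  rcases h with ⟨rfl, h⟩ | ⟨hm, rfl⟩
  · rcases h' with ⟨rfl, h'⟩ | ⟨hm', he⟩
    · rfl
    · rcases h with rfl | rfl
      · exact absurd he.symm (D.keep ⟨m', hm'⟩).2.1
      · exact absurd he.symm (D.keep ⟨m', hm'⟩).2.2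
  · rcases h' with ⟨rfl, h'⟩ | ⟨hm', he⟩
    · rcases h' with h' | h'
      · exact absurd h' (D.keep ⟨m, hm⟩).2.1
      · exact absurd h' (D.keep ⟨m, hm⟩).2.2
    · have : (⟨m, hm⟩ : {u : V // u ≠ v}) = ⟨m', hm'⟩ :=
        D.keep.injective (Subtype.ext he)
      exact congrArg Subtype.val this

lemma desc_of_ne_iff {m : V} (h : m ≠ v) {w : W} :
    D.Desc m w ↔ w = (D.keep ⟨m, h⟩).1 := by
  constructor
  · rintro (⟨rfl, _⟩ | ⟨hm, rfl⟩)
    · exact absurd rfl h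
    · rfl
  · rintro rfl; exact D.desc_of_ne h

lemma adj_desc {m m' : V} {w w' : W} (hm : m ≠ v) (hm' : m' ≠ v)
    (hd : D.Desc m w) (hd' : D.Desc m' w') (hadj : G.Adj m m') :
    G'.Adj w w' := by
  rw [D.desc_of_ne_iff hm] at hd
  rw [D.desc_of_ne_iff hm'] at hd'
  subst hd; subst hd'
  exact (D.adj_keep _ _).2 hadj

lemma adj_cover' {m : V} (hm : m ≠ v) (hadj : G.Adj m v) :
    ∃ w, D.Desc v w ∧ G'.Adj (D.keep ⟨m, hm⟩).1 w := by
  rcases D.adj_cover ⟨m, hm⟩ hadj with h | h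
  · exact ⟨v₁, D.desc_v₁, h⟩
  · exact ⟨v₂, D.desc_v₂, h⟩

end VertexSplit

/-- keep-equivalence for the first split (from `α` to `α ⊕ Fin 1`). -/
def keepEquiv0 {α : Type} (v : α) :
    {u : α // u ≠ v} ≃ {w : α ⊕ Fin 1 // w ≠ Sum.inl v ∧ w ≠ Sum.inr 0} where
  toFun a := ⟨Sum.inl a.1, by simp [a.2], by simp⟩
  invFun w :=
    match w with
    | ⟨Sum.inl a, h⟩ => ⟨a, fun he => h.1 (by rw [he])⟩
    | ⟨Sum.inr e, h⟩ => absurd (by rw [Subsingleton.elim e (0 : Fin 1)]) h.2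
  left_inv := by rintro ⟨a, h⟩; rfl
  right_inv := by
    rintro ⟨w, h⟩
    rcases w with a | e
    · rfl
    · exact absurd (by rw [Subsingleton.elim e (0 : Fin 1)]) h.2

/-- keep-equivalence for later splits (from `α ⊕ Fin m` to `α ⊕ Fin (m+1)`). -/
def keepEquivS {α : Type} {m : ℕ} (v : α ⊕ Fin m) :
    {u : α ⊕ Fin m // u ≠ v} ≃
      {w : α ⊕ Fin (m+1) // w ≠ Sum.map id Fin.castSucc v ∧ w ≠ Sum.inr ⟨m, Nat.lt_succ_self m⟩} where
  toFun a := ⟨Sum.map id Fin.castSucc a.1, by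
      refine ⟨fun he => a.2 ?_, ?_⟩
      · exact Sum.map_injective.mpr ⟨Function.injective_id, Fin.castSucc_injective m⟩ he
      · rcases a.1 with b | e <;> simp [Fin.ext_iff]
        omega⟩
  invFun w :=
    match w with
    | ⟨Sum.inl a, h⟩ => ⟨Sum.inl a, by
        rcases v with b | e
        · simpa using h.1
        · simp⟩
    | ⟨Sum.inr e, h⟩ => ⟨Sum.inr ⟨e.1, by
        have h2 := h.2
        have : e.1 ≠ m := by
          intro he; apply h2; apply congrArg Sum.inr; exact Fin.ext he
        omega⟩, by
        rcases v with b | f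
        · simp
        · intro he
          injection he with he'
          apply h.1
          simp only [Sum.map_inr]
          apply congrArg Sum.inr
          rw [Fin.ext_iff] at he' ⊢
          simpa using he'⟩
  left_inv := by
    rintro ⟨a, h⟩
    rcases a with b | e
    · rfl
    · simp only [Sum.map_inr]
      congr 1
  right_inv := by
    rintro ⟨w, h⟩
    rcases w with a | e
    · rfl
    · simp only [Sum.map_inr]
      apply Subtype.ext
      simp [Fin.ext_iff]

lemma keepEquivS_apply {α : Type} {m : ℕ} (v : α ⊕ Fin m) (a : {u : α ⊕ Fin m // u ≠ v}) :
    ((keepEquivS v) a).1 = Sum.map id Fin.castSucc a.1 := rfl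

abbrev Bse (V : Type) (k : ℕ) : Type := (Fin 3 × V) ⊕ (Fin (k - 2) × Fin 3) ⊕ Unit

/-- Relation describing the graph after `m ≥ 1` splits (in our chosen order:
first split the hub twice by colors, then split triangle `t` at step `t+2`). -/
def stageRel {V : Type} (G : SimpleGraph V) (c : V → Fin 3) (k m : ℕ) :
    (Bse V k ⊕ Fin m) → (Bse V k ⊕ Fin m) → Prop := fun a b =>
  match a, b with
  | Sum.inl (Sum.inl (i, x)), Sum.inl (Sum.inl (j, y)) => i = j ∧ G.Adj x y
  | Sum.inl (Sum.inl (_, x)), Sum.inl (Sum.inr (Sum.inr _)) => c x = 0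
  | Sum.inl (Sum.inl (_, x)), Sum.inr e =>
      (e.1 = 0 ∧ (m = 1 → c x ≠ 0) ∧ (m ≠ 1 → c x = 1)) ∨ (e.1 = 1 ∧ c x = 2)
  | Sum.inl (Sum.inr (Sum.inl (t, p))), Sum.inl (Sum.inr (Sum.inl (s, q))) =>
      t = s ∧ ((t.1 + 2 < m ∧ ((p.1 = 0 ∧ q.1 = 1) ∨ (p.1 = 1 ∧ q.1 = 2)))
        ∨ (¬ t.1 + 2 < m ∧ p ≠ q))
  | Sum.inl (Sum.inr (Sum.inl (t, p))), Sum.inr e => e.1 = t.1 + 2 ∧ p.1 = 2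
  | _, _ => False

def stageG {V : Type} (G : SimpleGraph V) (c : V → Fin 3) (k m : ℕ) :
    SimpleGraph (Bse V k ⊕ Fin m) := SimpleGraph.fromRel (stageRel G c k m)

section Splits
variable {V : Type} (G : SimpleGraph V) (C : G.Coloring (Fin 3)) (k : ℕ)

/-- Step 0: split the hub `u` of the gadget. -/
noncomputable def split0 (hk : 2 ≤ k) :
    VertexSplit (gadget G k) (stageG G C k 1)
      (Sum.inr (Sum.inr ())) (Sum.inl (Sum.inr (Sum.inr ()))) (Sum.inr 0) where
  keep := keepEquiv0 _
  ne := by simp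
  newNotAdj := by
    simp [stageG, SimpleGraph.fromRel_adj, stageRel]
  adj_keep := by
    rintro ⟨a, ha⟩ ⟨b, hb⟩
    rcases a with ⟨i, x⟩ | (⟨t, p⟩ | u)
    · rcases b with ⟨j, y⟩ | (⟨s, q⟩ | u)
      · simp only [keepEquiv0, Equiv.coe_fn_mk, stageG, gadget, SimpleGraph.fromRel_adj, stageRel]
        constructor
        · rintro ⟨hne, h⟩
          refine ⟨by simpa using hne, ?_⟩
          tauto
        · rintro ⟨hne, h⟩
          refine ⟨by simpa using hne, ?_⟩
          tauto
      · simp [keepEquiv0, stageG, gadget, SimpleGraph.fromRel_adj, stageRel]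
      · exact absurd rfl hb
    · rcases b with ⟨j, y⟩ | (⟨s, q⟩ | u)
      · simp [keepEquiv0, stageG, gadget, SimpleGraph.fromRel_adj, stageRel]
      · simp only [keepEquiv0, Equiv.coe_fn_mk, stageG, gadget, SimpleGraph.fromRel_adj, stageRel]
        constructor
        · rintro ⟨hne, h⟩
          refine ⟨by simpa using hne, ?_⟩
          rcases h with ⟨rfl, h⟩ | ⟨rfl, h⟩
          · exact Or.inl ⟨rfl, by omega⟩
          · refine Or.inr ⟨rfl, ?_⟩
            rcases h with ⟨_, h⟩ | ⟨_, h⟩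
            · omega
            · exact h
        · rintro ⟨hne, h⟩
          refine ⟨by simpa using hne, ?_⟩
          rcases h with ⟨rfl, h⟩ | ⟨rfl, h⟩
          · exact Or.inl ⟨rfl, Or.inr ⟨by omega, h⟩⟩
          · exact Or.inr ⟨rfl, Or.inr ⟨by omega, h⟩⟩
      · exact absurd rfl hb
    · exact absurd rfl ha
  adj_new₁ := by
    rintro ⟨a, ha⟩ h
    rcases a with ⟨i, x⟩ | (⟨t, p⟩ | u)
    · simp [gadget, SimpleGraph.fromRel_adj]
    · simp [keepEquiv0, stageG, SimpleGraph.fromRel_adj, stageRel] at h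
    · exact absurd rfl ha
  adj_new₂ := by
    rintro ⟨a, ha⟩ h
    rcases a with ⟨i, x⟩ | (⟨t, p⟩ | u)
    · simp [gadget, SimpleGraph.fromRel_adj]
    · simp [keepEquiv0, stageG, SimpleGraph.fromRel_adj, stageRel] at h
    · exact absurd rfl ha
  adj_cover := by
    rintro ⟨a, ha⟩ h
    rcases a with ⟨i, x⟩ | (⟨t, p⟩ | u)
    · by_cases h0 : C x = 0
      · left
        simp [keepEquiv0, stageG, SimpleGraph.fromRel_adj, stageRel, h0]
      · right
        simp [keepEquiv0, stageG, SimpleGraph.fromRel_adj, stageRel, h0]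
    · simp [gadget, SimpleGraph.fromRel_adj] at h
    · exact absurd rfl ha

section Splits2
variable {V : Type} (G : SimpleGraph V) (C : G.Coloring (Fin 3)) (k : ℕ)

lemma fin3cases (a : Fin 3) : a = 0 ∨ a = 1 ∨ a = 2 := by fin_cases a <;> tauto

/-- Step 1: split the second hub-vertex by colors. -/
noncomputable def split1 :
    VertexSplit (stageG G C k 1) (stageG G C k 2)
      (Sum.inr 0) (Sum.map id Fin.castSucc (Sum.inr 0)) (Sum.inr ⟨1, Nat.lt_succ_self 1⟩) where
  keep := keepEquivS _
  ne := by simp [Fin.ext_iff]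
  newNotAdj := by
    simp [stageG, SimpleGraph.fromRel_adj, stageRel]
  adj_keep := by
    rintro ⟨a, ha⟩ ⟨b, hb⟩
    rcases a with (⟨i, x⟩ | (⟨t, p⟩ | u)) | e
    all_goals try (obtain rfl : e = 0 := Subsingleton.elim e 0; exact absurd rfl ha)
    all_goals rcases b with (⟨j, y⟩ | (⟨s, q⟩ | w)) | f
    all_goals try (obtain rfl : f = 0 := Subsingleton.elim f 0; exact absurd rfl hb)
    all_goals first
      | (simp only [keepEquivS_apply] at *; simp [keepEquivS, stageG, SimpleGraph.fromRel_adj, stageRel, Fin.ext_iff, -Fin.val_eq_zero_iff,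
          Prod.ext_iff]; done)
      | (have hp := p.isLt; have hq := q.isLt;
         simp only [keepEquivS_apply] at *; simp [keepEquivS, stageG, SimpleGraph.fromRel_adj, stageRel, Fin.ext_iff, -Fin.val_eq_zero_iff,
          Prod.ext_iff]; omega)
      | (simp only [keepEquivS_apply] at *; simp [keepEquivS, stageG, SimpleGraph.fromRel_adj, stageRel, Fin.ext_iff, -Fin.val_eq_zero_iff,
          Prod.ext_iff]; tauto)
  adj_new₁ := by
    rintro ⟨a, ha⟩ h
    rcases a with (⟨i, x⟩ | (⟨t, p⟩ | u)) | e
    all_goals try (obtain rfl : e = 0 := Subsingleton.elim e 0; exact absurd rfl ha)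
    all_goals first
      | (simp only [keepEquivS_apply] at *; simp [keepEquivS, stageG, SimpleGraph.fromRel_adj, stageRel, Fin.ext_iff, -Fin.val_eq_zero_iff] at h; done)
      | (have hcx := (C x).isLt;
         simp only [keepEquivS_apply] at *; simp [keepEquivS, stageG, SimpleGraph.fromRel_adj, stageRel, Fin.ext_iff, -Fin.val_eq_zero_iff] at h ⊢; omega)
      | (simp only [keepEquivS_apply] at *; simp [keepEquivS, stageG, SimpleGraph.fromRel_adj, stageRel, Fin.ext_iff, -Fin.val_eq_zero_iff] at h; omega)
  adj_new₂ := by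
    rintro ⟨a, ha⟩ h
    rcases a with (⟨i, x⟩ | (⟨t, p⟩ | u)) | e
    all_goals try (obtain rfl : e = 0 := Subsingleton.elim e 0; exact absurd rfl ha)
    all_goals first
      | (simp only [keepEquivS_apply] at *; simp [keepEquivS, stageG, SimpleGraph.fromRel_adj, stageRel, Fin.ext_iff, -Fin.val_eq_zero_iff] at h; done)
      | (have hcx := (C x).isLt;
         simp only [keepEquivS_apply] at *; simp [keepEquivS, stageG, SimpleGraph.fromRel_adj, stageRel, Fin.ext_iff, -Fin.val_eq_zero_iff] at h ⊢; omega)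
      | (simp only [keepEquivS_apply] at *; simp [keepEquivS, stageG, SimpleGraph.fromRel_adj, stageRel, Fin.ext_iff, -Fin.val_eq_zero_iff] at h; omega)
  adj_cover := by
    rintro ⟨a, ha⟩ h
    rcases a with (⟨i, x⟩ | (⟨t, p⟩ | u)) | e
    all_goals try (obtain rfl : e = 0 := Subsingleton.elim e 0; exact absurd rfl ha)
    all_goals first
      | (simp only [keepEquivS_apply] at *; simp [keepEquivS, stageG, SimpleGraph.fromRel_adj, stageRel, Fin.ext_iff, -Fin.val_eq_zero_iff] at h; done)
      | (have hcx := (C x).isLt;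
         simp only [keepEquivS_apply] at *; simp [keepEquivS, stageG, SimpleGraph.fromRel_adj, stageRel, Fin.ext_iff, -Fin.val_eq_zero_iff] at h ⊢; omega)
      | (simp only [keepEquivS_apply] at *; simp [keepEquivS, stageG, SimpleGraph.fromRel_adj, stageRel, Fin.ext_iff, -Fin.val_eq_zero_iff] at h; omega)

set_option maxHeartbeats 2000000 in
/-- Steps `m ≥ 2`: split the base vertex of triangle `m - 2`. -/
noncomputable def splitS (m : ℕ) (hm : 2 ≤ m) (hmk : m < k) :
    VertexSplit (stageG G C k m) (stageG G C k (m + 1))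
      (Sum.inl (Sum.inr (Sum.inl (⟨m - 2, by omega⟩, 0))))
      (Sum.map id Fin.castSucc (Sum.inl (Sum.inr (Sum.inl (⟨m - 2, by omega⟩, 0)))))
      (Sum.inr ⟨m, Nat.lt_succ_self m⟩) where
  keep := keepEquivS _
  ne := by simp
  newNotAdj := by
    simp [stageG, SimpleGraph.fromRel_adj, stageRel, Fin.ext_iff]
  adj_keep := by
    rintro ⟨a, ha⟩ ⟨b, hb⟩
    have h1 : m ≠ 1 := by omega
    have h2 : m + 1 ≠ 1 := by omega
    rcases a with (⟨i, x⟩ | (⟨t, p⟩ | u)) | e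
    all_goals rcases b with (⟨j, y⟩ | (⟨s, q⟩ | w)) | f
    all_goals first
      | (simp only [keepEquivS_apply] at *; simp [keepEquivS, stageG, SimpleGraph.fromRel_adj, stageRel, Fin.ext_iff, -Fin.val_eq_zero_iff,
          Prod.ext_iff, h1, h2]; done)
      | (have hp := p.isLt; have hq := q.isLt; have ht := t.isLt; have hs := s.isLt;
         simp only [ne_eq, Sum.inl.injEq, Sum.inr.injEq, Prod.mk.injEq, Fin.ext_iff,
           not_and] at ha hb;
         simp only [keepEquivS_apply] at *; simp [keepEquivS, stageG, SimpleGraph.fromRel_adj, stageRel, Fin.ext_iff, -Fin.val_eq_zero_iff,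
          Prod.ext_iff, h1, h2]; omega)
      | (have h0 : m ≠ 0 := by omega
         simp only [keepEquivS_apply] at *; simp [keepEquivS, stageG, SimpleGraph.fromRel_adj, stageRel, Fin.ext_iff, -Fin.val_eq_zero_iff,
          Prod.ext_iff, h0, h1, h2] <;> tauto)
  adj_new₁ := by
    rintro ⟨a, ha⟩ h
    have h1 : m ≠ 1 := by omega
    have h2 : m + 1 ≠ 1 := by omega
    rcases a with (⟨i, x⟩ | (⟨t, p⟩ | u)) | e
    all_goals first
      | (simp only [keepEquivS_apply] at *; simp [keepEquivS, stageG, SimpleGraph.fromRel_adj, stageRel, Fin.ext_iff, -Fin.val_eq_zero_iff, h1, h2]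
          at h; done)
      | (have hp := p.isLt; have ht := t.isLt;
         simp only [ne_eq, Sum.inl.injEq, Sum.inr.injEq, Prod.mk.injEq, Fin.ext_iff,
           not_and] at ha;
         simp only [keepEquivS_apply] at *; simp [keepEquivS, stageG, SimpleGraph.fromRel_adj, stageRel, Fin.ext_iff, -Fin.val_eq_zero_iff,
           Prod.ext_iff, h1, h2] at h ⊢; omega)
      | (have he := e.isLt;
         simp only [keepEquivS_apply] at *; simp [keepEquivS, stageG, SimpleGraph.fromRel_adj, stageRel, Fin.ext_iff, -Fin.val_eq_zero_iff, h1, h2]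
           at h; omega)
  adj_new₂ := by
    rintro ⟨a, ha⟩ h
    have h1 : m ≠ 1 := by omega
    have h2 : m + 1 ≠ 1 := by omega
    rcases a with (⟨i, x⟩ | (⟨t, p⟩ | u)) | e
    all_goals first
      | (simp only [keepEquivS_apply] at *; simp [keepEquivS, stageG, SimpleGraph.fromRel_adj, stageRel, Fin.ext_iff, -Fin.val_eq_zero_iff, h1, h2]
          at h; done)
      | (simp only [keepEquivS_apply] at *; simp [keepEquivS, stageG, SimpleGraph.fromRel_adj, stageRel, Fin.ext_iff, -Fin.val_eq_zero_iff, h1, h2]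
          at h; omega)
      | (have hp := p.isLt; have ht := t.isLt;
         simp only [ne_eq, Sum.inl.injEq, Sum.inr.injEq, Prod.mk.injEq, Fin.ext_iff,
           not_and] at ha;
         simp only [keepEquivS_apply] at *; simp [keepEquivS, stageG, SimpleGraph.fromRel_adj, stageRel, Fin.ext_iff, -Fin.val_eq_zero_iff,
           Prod.ext_iff, h1, h2] at h ⊢; omega)
  adj_cover := by
    rintro ⟨a, ha⟩ h
    have h1 : m ≠ 1 := by omega
    have h2 : m + 1 ≠ 1 := by omega
    rcases a with (⟨i, x⟩ | (⟨t, p⟩ | u)) | e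
    all_goals first
      | (simp only [keepEquivS_apply] at *; simp [keepEquivS, stageG, SimpleGraph.fromRel_adj, stageRel, Fin.ext_iff, -Fin.val_eq_zero_iff, h1, h2]
          at h; done)
      | (have he := e.isLt;
         simp only [keepEquivS_apply] at *; simp [keepEquivS, stageG, SimpleGraph.fromRel_adj, stageRel, Fin.ext_iff, -Fin.val_eq_zero_iff, h1, h2]
          at h; omega)
      | (have hp := p.isLt; have ht := t.isLt;
         simp only [ne_eq, Sum.inl.injEq, Sum.inr.injEq, Prod.mk.injEq, Fin.ext_iff,
           not_and] at ha;
         simp only [keepEquivS_apply] at *; simp [keepEquivS, stageG, SimpleGraph.fromRel_adj, stageRel, Fin.ext_iff, -Fin.val_eq_zero_iff,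
           Prod.ext_iff, h1, h2] at h ⊢; omega)

end Splits2

section Final
variable {V : Type} (G : SimpleGraph V) (C : G.Coloring (Fin 3)) (k : ℕ)

set_option maxHeartbeats 2000000 in
lemma stage_final_cliqueFree (htf : G.CliqueFree 3) (hk : 2 ≤ k) :
    (stageG G C k k).CliqueFree 3 := by
  classical
  intro s hs
  rw [SimpleGraph.is3Clique_iff] at hs
  obtain ⟨a, b, c, hab, hac, hbc, -⟩ := hs
  have h1 : k ≠ 1 := by omega
  rcases a with (⟨i, x⟩ | (⟨t, p⟩ | u)) | e <;>
    rcases b with (⟨j, y⟩ | (⟨s', q⟩ | w)) | f <;>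
    rcases c with (⟨i', z⟩ | (⟨t', r⟩ | u')) | g <;>
    simp only [stageG, SimpleGraph.fromRel_adj, stageRel, Fin.ext_iff, Prod.ext_iff, ne_eq,
      Sum.inl.injEq, Sum.inr.injEq, Prod.mk.injEq, not_and, false_or, or_false,
      false_and, and_false, not_false_eq_true, and_true, true_and] at hab hac hbc
  all_goals try omega
  all_goals first
    | (have hxy : G.Adj x y := by rcases hab with ⟨-, ⟨-, h⟩ | ⟨-, h⟩⟩; exacts [h, h.symm]
       have hxz : G.Adj x z := by rcases hac with ⟨-, ⟨-, h⟩ | ⟨-, h⟩⟩; exacts [h, h.symm]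
       have hyz : G.Adj y z := by rcases hbc with ⟨-, ⟨-, h⟩ | ⟨-, h⟩⟩; exacts [h, h.symm]
       exact htf {x, y, z} (SimpleGraph.is3Clique_iff.mpr ⟨x, y, z, hxy, hxz, hyz, rfl⟩))
    | (have hxy : G.Adj x y := by rcases hab with ⟨-, ⟨-, h⟩ | ⟨-, h⟩⟩; exacts [h, h.symm]
       exact C.valid hxy (Fin.val_injective (by omega)))
    | (have hxz : G.Adj x z := by rcases hac with ⟨-, ⟨-, h⟩ | ⟨-, h⟩⟩; exacts [h, h.symm]
       exact C.valid hxz (Fin.val_injective (by omega)))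
    | (have hyz : G.Adj y z := by rcases hbc with ⟨-, ⟨-, h⟩ | ⟨-, h⟩⟩; exacts [h, h.symm]
       exact C.valid hyz (Fin.val_injective (by omega)))
end Final


/-- For `k ≥ 2` and a triangle-free graph `G`, `G` is properly 3-colorable iff at most
`k` vertex splits can turn the gadget graph into a triangle-free graph. -/
theorem threeColorable_iff_split_gadget_triangleFree {V : Type} [Fintype V]
    (G : SimpleGraph V) (k : ℕ) (hk : 2 ≤ k) (htf : G.CliqueFree 3) :
    G.Colorable 3 ↔
    (∃ (ℓ : ℕ) (Gs : ℕ → FinGraph), ℓ ≤ k ∧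
      Gs 0 = ⟨(Fin 3 × V) ⊕ (Fin (k - 2) × Fin 3) ⊕ Unit, inferInstance, gadget G k⟩ ∧
      (∀ i < ℓ, (Gs i).Step (Gs (i + 1))) ∧
      ((Gs ℓ).G).CliqueFree 3) := by
  constructor
  · intro hcol
    obtain ⟨C⟩ := hcol
    refine ⟨k, fun n => match n with
      | 0 => ⟨Bse V k, inferInstance, gadget G k⟩
      | (m+1) => ⟨Bse V k ⊕ Fin (m+1), inferInstance, stageG G C k (m+1)⟩,
      le_refl k, rfl, ?_, ?_⟩
    · intro i hi
      match i with
      | 0 => exact ⟨_, _, _, ⟨split0 G C k hk⟩⟩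
      | 1 => exact ⟨_, _, _, ⟨split1 G C k⟩⟩
      | (m+2) => exact ⟨_, _, _, ⟨splitS G C k (m+2) (by omega) hi⟩⟩
    · obtain ⟨k', rfl⟩ : ∃ k', k = k' + 1 := ⟨k - 1, by omega⟩
      exact stage_final_cliqueFree G C (k' + 1) htf hk
  · rintro ⟨ℓ, Gs0, hℓ, h0, hstep0, htf0⟩
    classical
    -- normalize the sequence so that stage `0` is definitionally the gadget
    set X : FinGraph := ⟨Bse V k, inferInstance, gadget G k⟩ with hX
    let Gs : ℕ → FinGraph := fun n => match n with
      | 0 => X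
      | (m+1) => Gs0 (m+1)
    have hstep : ∀ i, i < ℓ → (Gs i).Step (Gs (i+1)) := by
      intro i hi
      match i with
      | 0 =>
        have h := hstep0 0 hi
        rw [h0] at h
        exact h
      | (m+1) => exact hstep0 (m+1) hi
    have htf2 : ((Gs ℓ).G).CliqueFree 3 := by
      match ℓ, htf0 with
      | 0, htf0 => rw [h0] at htf0; exact htf0
      | (m+1), htf0 => exact htf0
    clear hstep0 htf0 h0
    choose sv sv₁ sv₂ hsp using hstep
    let Sp : ∀ i (h : i < ℓ), VertexSplit (Gs i).G (Gs (i+1)).G (sv i h) (sv₁ i h) (sv₂ i h) :=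
      fun i h => (hsp i h).some
    -- the iterated descendant relation
    let R : ∀ i, Bse V k → (Gs i).V → Prop := fun i =>
      Nat.rec (motive := fun i => Bse V k → (Gs i).V → Prop) (fun u w => u = w)
        (fun i r u w => ∃ h : i < ℓ, ∃ m, r u m ∧ (Sp i h).Desc m w) i
    have Rzero : ∀ u w, R 0 u w ↔ u = w := fun _ _ => Iff.rfl
    have Rsucc : ∀ i u w, R (i+1) u w ↔ ∃ h : i < ℓ, ∃ m, R i u m ∧ (Sp i h).Desc m w :=
      fun _ _ _ => Iff.rfl
    -- existence of an original for each vertex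
    have Rex : ∀ i, i ≤ ℓ → ∀ w : (Gs i).V, ∃ u, R i u w := by
      intro i
      induction i with
      | zero => exact fun _ w => ⟨w, rfl⟩
      | succ i ih =>
        intro hi w
        have h : i < ℓ := hi
        obtain ⟨m, hm⟩ := (Sp i h).desc_exists w
        obtain ⟨u, hu⟩ := ih (le_of_lt h) m
        exact ⟨u, h, m, hu, hm⟩
    -- uniqueness of the original
    have Runiq : ∀ i, ∀ u u' w, R i u w → R i u' w → u = u' := by
      intro i
      induction i with
      | zero => intro u u' w h h'; exact h.trans h'.symm
      | succ i ih =>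
        intro u u' w h h'
        obtain ⟨hl, m, hm, hd⟩ := (Rsucc i u w).1 h
        obtain ⟨hl', m', hm', hd'⟩ := (Rsucc i u' w).1 h'
        obtain rfl : m = m' := (Sp i hl).eq_of_desc_desc hd hd'
        exact ih u u' m hm hm'
    -- the original vertex split at step i
    let o : ∀ i, i < ℓ → Bse V k := fun i h => (Rex i (le_of_lt h) (sv i h)).choose
    have ho : ∀ i (h : i < ℓ), R i (o i h) (sv i h) :=
      fun i h => (Rex i (le_of_lt h) (sv i h)).choose_spec
    -- a never-split vertex has a unique descendant at each stage
    have Upers : ∀ a : Bse V k, (∀ i (h : i < ℓ), o i h ≠ a) → ∀ i, i ≤ ℓ →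
        ∃ w, R i a w ∧ ∀ y, R i a y → y = w := by
      intro a ha i
      induction i with
      | zero => exact fun _ => ⟨a, rfl, fun y hy => hy.symm⟩
      | succ i ih =>
        intro hi1
        have hi : i < ℓ := hi1
        obtain ⟨w, hw, hwu⟩ := ih (le_of_lt hi)
        have hne : w ≠ sv i hi := by
          intro he
          exact ha i hi (Runiq i (o i hi) a (sv i hi) (ho i hi) (he ▸ hw))
        refine ⟨((Sp i hi).keep ⟨w, hne⟩).1, (Rsucc i a _).2 ⟨hi, w, hw, (Sp i hi).desc_of_ne hne⟩, ?_⟩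
        intro y hy
        obtain ⟨h', m, hm, hd⟩ := (Rsucc i a y).1 hy
        obtain rfl : m = w := hwu m hm
        rw [(Sp i h').desc_of_ne_iff hne] at hd
        exact hd
    -- adjacency persists along descendants when the first endpoint is never split
    have Apers : ∀ a b : Bse V k, (∀ i (h : i < ℓ), o i h ≠ a) → (gadget G k).Adj a b →
        ∀ i, i ≤ ℓ → ∃ w m, R i a w ∧ R i b m ∧ (Gs i).G.Adj w m := by
      intro a b ha hadj i
      induction i with
      | zero => exact fun _ => ⟨a, b, rfl, rfl, hadj⟩
      | succ i ih =>
        intro hi1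
        have hi : i < ℓ := hi1
        obtain ⟨w, m, hw, hm, hwm⟩ := ih (le_of_lt hi)
        have hne : w ≠ sv i hi := by
          intro he
          exact ha i hi (Runiq i (o i hi) a (sv i hi) (ho i hi) (he ▸ hw))
        by_cases hms : m = sv i hi
        · subst hms
          obtain ⟨w', hd', hadj'⟩ := (Sp i hi).adj_cover' hne hwm
          exact ⟨_, w', (Rsucc i a _).2 ⟨hi, w, hw, (Sp i hi).desc_of_ne hne⟩,
            (Rsucc i b _).2 ⟨hi, _, hm, hd'⟩, hadj'⟩
        · exact ⟨_, _, (Rsucc i a _).2 ⟨hi, w, hw, (Sp i hi).desc_of_ne hne⟩,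
            (Rsucc i b _).2 ⟨hi, m, hm, (Sp i hi).desc_of_ne hms⟩,
            ((Sp i hi).adj_keep ⟨w, hne⟩ ⟨m, hms⟩).2 hwm⟩
    -- basic gadget adjacencies
    have gadj_tri : ∀ (t : Fin (k-2)) (p q : Fin 3), p ≠ q →
        (gadget G k).Adj (Sum.inr (Sum.inl (t, p))) (Sum.inr (Sum.inl (t, q))) := by
      intro t p q hpq
      simp [gadget, SimpleGraph.fromRel_adj, hpq, Prod.ext_iff]
    have gadj_hub : ∀ (c : Fin 3) (x : V),
        (gadget G k).Adj (Sum.inl (c, x)) (Sum.inr (Sum.inr ())) := by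
      intro c x; simp [gadget, SimpleGraph.fromRel_adj]
    have gadj_copy : ∀ (c : Fin 3) (x y : V), G.Adj x y →
        (gadget G k).Adj (Sum.inl (c, x)) (Sum.inl (c, y)) := by
      intro c x y h
      simp [gadget, SimpleGraph.fromRel_adj, h, h.symm, Prod.ext_iff, h.ne]
    -- every triangle is hit by some split
    have tri_hit : ∀ t : Fin (k-2), ∃ (j : Fin ℓ) (p : Fin 3),
        o j.1 j.2 = Sum.inr (Sum.inl (t, p)) := by
      intro t
      by_contra hno
      push_neg at hno
      have hunt : ∀ p : Fin 3, ∀ i (h : i < ℓ), o i h ≠ Sum.inr (Sum.inl (t, p)) :=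
        fun p i h => hno ⟨i, h⟩ p
      obtain ⟨w0, hw0, hu0⟩ := Upers _ (hunt 0) ℓ le_rfl
      obtain ⟨w1, hw1, hu1⟩ := Upers _ (hunt 1) ℓ le_rfl
      obtain ⟨w2, hw2, hu2⟩ := Upers _ (hunt 2) ℓ le_rfl
      obtain ⟨a01, b01, ha01, hb01, hA01⟩ :=
        Apers _ _ (hunt 0) (gadj_tri t 0 1 (by decide)) ℓ le_rfl
      obtain ⟨a02, b02, ha02, hb02, hA02⟩ :=
        Apers _ _ (hunt 0) (gadj_tri t 0 2 (by decide)) ℓ le_rfl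
      obtain ⟨a12, b12, ha12, hb12, hA12⟩ :=
        Apers _ _ (hunt 1) (gadj_tri t 1 2 (by decide)) ℓ le_rfl
      rw [hu0 _ ha01, hu1 _ hb01] at hA01
      rw [hu0 _ ha02, hu2 _ hb02] at hA02
      rw [hu1 _ ha12, hu2 _ hb12] at hA12
      exact htf2 {w0, w1, w2} (SimpleGraph.is3Clique_iff.mpr ⟨w0, w1, w2, hA01, hA02, hA12, rfl⟩)
    choose jt pt hjt using tri_hit
    have jt_inj : Function.Injective jt := by
      intro t t' hab
      have h3 : o (jt t).1 (jt t).2 = o (jt t').1 (jt t').2 :=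
        congrArg (fun j : Fin ℓ => o j.1 j.2) hab
      rw [hjt t, hjt t'] at h3
      simp [Prod.ext_iff] at h3
      exact h3.1
    -- some copy of G is never touched
    have copy_free : ∃ c : Fin 3, ∀ (i : ℕ) (h : i < ℓ) (x : V), o i h ≠ Sum.inl (c, x) := by
      by_contra hno
      push_neg at hno
      choose jc hc xc hxc using hno
      have hinj : Function.Injective
          (Sum.elim jt (fun c => (⟨jc c, hc c⟩ : Fin ℓ))) := by
        rintro (t | c) (t' | c') hab <;> simp only [Sum.elim_inl, Sum.elim_inr] at hab
        · exact congrArg Sum.inl (jt_inj hab)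
        · exfalso
          have h3 : o (jt t).1 (jt t).2 = o (jc c') (hc c') :=
            congrArg (fun j : Fin ℓ => o j.1 j.2) hab
          rw [hjt t, hxc c'] at h3
          simp at h3
        · exfalso
          have h3 : o (jc c) (hc c) = o (jt t').1 (jt t').2 :=
            congrArg (fun j : Fin ℓ => o j.1 j.2) hab
          rw [hjt t', hxc c] at h3
          simp at h3
        · have h3 : o (jc c) (hc c) = o (jc c') (hc c') :=
            congrArg (fun j : Fin ℓ => o j.1 j.2) hab
          rw [hxc c, hxc c'] at h3
          simp [Prod.ext_iff] at h3
          exact congrArg Sum.inr h3.1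
      have hcard := Fintype.card_le_of_injective _ hinj
      simp at hcard
      omega
    obtain ⟨col, hcol⟩ := copy_free
    -- the hub is split at most twice
    have hUQ2 : (Finset.univ.filter
        (fun j : Fin ℓ => o j.1 j.2 = Sum.inr (Sum.inr ()))).card ≤ 2 := by
      set UQ := Finset.univ.filter (fun j : Fin ℓ => o j.1 j.2 = Sum.inr (Sum.inr ())) with hUQd
      have hsub : ∀ t : Fin (k-2), jt t ∈ UQᶜ := by
        intro t
        simp [hUQd, hjt t]
      have hcard := Finset.card_le_card_of_injOn (s := (Finset.univ : Finset (Fin (k-2)))) (t := UQᶜ) jt (fun t _ => hsub t)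
        (fun a _ b _ h => jt_inj h)
      have h1 : UQᶜ.card = Fintype.card (Fin ℓ) - UQ.card := Finset.card_compl UQ
      have h2 : UQ.card ≤ ℓ := by
        have := Finset.card_le_univ UQ
        simpa using this
      simp only [Finset.card_univ, Fintype.card_fin] at hcard h1 h2
      omega
    -- the set of descendants of the hub is small
    have SU : ∀ i, i ≤ ℓ → ∃ S : Finset (Gs i).V,
        (∀ w, R i (Sum.inr (Sum.inr ())) w → w ∈ S) ∧
        S.card ≤ 1 + (Finset.univ.filter
          (fun j : Fin ℓ => j.1 < i ∧ o j.1 j.2 = Sum.inr (Sum.inr ()))).card := by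
      intro i
      induction i with
      | zero =>
        intro _
        refine ⟨{(Sum.inr (Sum.inr ()) : Bse V k)}, ?_, by simp⟩
        intro w hw
        rw [Rzero] at hw
        simp [← hw]
      | succ i ih =>
        intro hi1
        have hi : i < ℓ := hi1
        obtain ⟨S, hcov, hcard⟩ := ih (le_of_lt hi)
        have hmono : (Finset.univ.filter
            (fun j : Fin ℓ => j.1 < i ∧ o j.1 j.2 = Sum.inr (Sum.inr ()))) ⊆
            (Finset.univ.filter
            (fun j : Fin ℓ => j.1 < i + 1 ∧ o j.1 j.2 = Sum.inr (Sum.inr ()))) := by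
          intro j hj
          simp only [Finset.mem_filter] at hj ⊢
          exact ⟨hj.1, by omega, hj.2.2⟩
        by_cases hoU : o i hi = Sum.inr (Sum.inr ())
        · refine ⟨insert (sv₁ i hi) (insert (sv₂ i hi)
            ((S.erase (sv i hi)).image (fun w => if hw : w = sv i hi then sv₁ i hi
              else ((Sp i hi).keep ⟨w, hw⟩).1))), ?_, ?_⟩
          · intro w' hw'
            obtain ⟨h', m, hm, hd⟩ := (Rsucc i _ w').1 hw'
            rcases hd with ⟨hmv, rfl | rfl⟩ | ⟨hm2, rfl⟩
            · exact Finset.mem_insert_self _ _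
            · exact Finset.mem_insert_of_mem (Finset.mem_insert_self _ _)
            · have hmS : m ∈ S.erase (sv i hi) := Finset.mem_erase.mpr ⟨hm2, hcov m hm⟩
              have he : ((Sp i hi).keep ⟨m, hm2⟩).1 = if hw : m = sv i hi then sv₁ i hi
                  else ((Sp i hi).keep ⟨m, hw⟩).1 := by rw [dif_neg hm2]
              rw [he]
              exact Finset.mem_insert_of_mem (Finset.mem_insert_of_mem
                (Finset.mem_image_of_mem _ hmS))
          · have hsvS : sv i hi ∈ S := hcov _ (hoU ▸ ho i hi)
            have hnm : (⟨i, hi⟩ : Fin ℓ) ∉ (Finset.univ.filter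
                (fun j : Fin ℓ => j.1 < i ∧ o j.1 j.2 = Sum.inr (Sum.inr ()))) := by
              simp
            have hins : insert (⟨i, hi⟩ : Fin ℓ) (Finset.univ.filter
                (fun j : Fin ℓ => j.1 < i ∧ o j.1 j.2 = Sum.inr (Sum.inr ()))) ⊆
                (Finset.univ.filter
                (fun j : Fin ℓ => j.1 < i + 1 ∧ o j.1 j.2 = Sum.inr (Sum.inr ()))) := by
              intro j hj
              rcases Finset.mem_insert.mp hj with rfl | hj'
              · simp [hoU]
              · exact hmono hj'
            have e1 := Finset.card_insert_le (sv₁ i hi) (insert (sv₂ i hi)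
              ((S.erase (sv i hi)).image (fun w => if hw : w = sv i hi then sv₁ i hi
                else ((Sp i hi).keep ⟨w, hw⟩).1)))
            have e2 := Finset.card_insert_le (sv₂ i hi)
              ((S.erase (sv i hi)).image (fun w => if hw : w = sv i hi then sv₁ i hi
                else ((Sp i hi).keep ⟨w, hw⟩).1))
            have e3 := Finset.card_image_le (s := S.erase (sv i hi))
              (f := fun w => if hw : w = sv i hi then sv₁ i hi
                else ((Sp i hi).keep ⟨w, hw⟩).1)
            have e4 := Finset.card_erase_of_mem hsvS
            have e5 := Finset.card_le_card hins
            have e6 := Finset.card_insert_of_notMem hnm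
            have e7 : 0 < S.card := Finset.card_pos.mpr ⟨_, hsvS⟩
            omega
        · refine ⟨S.image (fun w => if hw : w = sv i hi then sv₁ i hi
            else ((Sp i hi).keep ⟨w, hw⟩).1), ?_, ?_⟩
          · intro w' hw'
            obtain ⟨h', m, hm, hd⟩ := (Rsucc i _ w').1 hw'
            rcases hd with ⟨hmv, hw12⟩ | ⟨hm2, rfl⟩
            · exact absurd (Runiq i (o i hi) _ (sv i hi) (ho i hi) (hmv ▸ hm)) hoU
            · have he : ((Sp i hi).keep ⟨m, hm2⟩).1 = if hw : m = sv i hi then sv₁ i hi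
                  else ((Sp i hi).keep ⟨m, hw⟩).1 := by rw [dif_neg hm2]
              rw [he]
              exact Finset.mem_image_of_mem _ (hcov m hm)
          · have e3 := Finset.card_image_le (s := S)
              (f := fun w => if hw : w = sv i hi then sv₁ i hi
                else ((Sp i hi).keep ⟨w, hw⟩).1)
            have e5 := Finset.card_le_card hmono
            omega
    obtain ⟨SF, hScov, hScard⟩ := SU ℓ le_rfl
    have hS3 : SF.card ≤ 3 := by
      have hsub2 : (Finset.univ.filter
          (fun j : Fin ℓ => j.1 < ℓ ∧ o j.1 j.2 = Sum.inr (Sum.inr ()))) ⊆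
          (Finset.univ.filter (fun j : Fin ℓ => o j.1 j.2 = Sum.inr (Sum.inr ()))) := by
        intro j hj
        simp only [Finset.mem_filter] at hj ⊢
        exact ⟨hj.1, hj.2.2⟩
      have := Finset.card_le_card hsub2
      omega
    have hemb : Nonempty (↥SF ↪ Fin 3) := by
      apply Function.Embedding.nonempty_of_card_le
      rw [Fintype.card_coe, Fintype.card_fin]
      exact hS3
    obtain ⟨φ⟩ := hemb
    -- descendants of the untouched copy
    have huntx : ∀ x : V, ∀ (i : ℕ) (h : i < ℓ), o i h ≠ Sum.inl (col, x) :=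
      fun x i h => hcol i h x
    have hdx := fun x => Upers _ (huntx x) ℓ le_rfl
    let d : V → (Gs ℓ).V := fun x => (hdx x).choose
    have hdR : ∀ x, R ℓ (Sum.inl (col, x)) (d x) := fun x => (hdx x).choose_spec.1
    have hdU : ∀ x, ∀ y, R ℓ (Sum.inl (col, x)) y → y = d x :=
      fun x => (hdx x).choose_spec.2
    have hadjU := fun x => Apers _ _ (huntx x) (gadj_hub col x) ℓ le_rfl
    let mfun : V → (Gs ℓ).V := fun x => (hadjU x).choose_spec.choose
    have hmfun : ∀ x, R ℓ (Sum.inr (Sum.inr ())) (mfun x) ∧ (Gs ℓ).G.Adj (d x) (mfun x) := by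
      intro x
      obtain ⟨hw, hm, hA⟩ := (hadjU x).choose_spec.choose_spec
      have hwd := hdU x _ hw
      refine ⟨hm, ?_⟩
      rw [← hwd]
      exact hA
    have hmem : ∀ x, mfun x ∈ SF := fun x => hScov _ (hmfun x).1
    refine ⟨SimpleGraph.Coloring.mk (fun x => φ ⟨mfun x, hmem x⟩) ?_⟩
    intro x y hxy hcxy
    have hmeq : mfun x = mfun y := congrArg Subtype.val (φ.injective hcxy)
    obtain ⟨w, m, hw, hm, hA⟩ := Apers _ _ (huntx x) (gadj_copy col x y hxy) ℓ le_rfl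
    rw [hdU x _ hw, hdU y _ hm] at hA
    exact htf2 {d x, d y, mfun x} (SimpleGraph.is3Clique_iff.mpr
      ⟨d x, d y, mfun x, hA, (hmfun x).2, hmeq ▸ (hmfun y).2, rfl⟩)
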